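/- arXiv:2404.11648 — 2 statements merged into one kernel-verified Lean document; each statement's English description precedes it below -/
import Mathlib

section
/- Let m be odd and let F be a multilinear polynomial in vectors e_1,…,e_m (with coefficients depending polynomially on momenta p_a), decomposed as F = Σ_{k} Σ_{ρ∈𝔖_k} ∏_{(ab)∈ρ} ⟨e_a,e_b⟩ F^ρ where each F^ρ depends only on the ⟨e_a,p_b⟩ and ⟨p_a,p_b⟩. If F satisfies the gauge-invariance relation F^ρ|_{e_j→p_j} = -Σ_{i∉ρ, i≠j} ⟨e_i,e_j⟩ F^{ρ⊔(ij)}|_{e_j→p_j} for every j ∉ ρ, then for any single-element set I = {j} the dimensionally reduced value Σ_{ρ∈(𝔖_{(m-1)/2}|I)} (-1)^{(m-1)/2} ∏_{(ab)∈ρ} ⟨p_a,p_b⟩ F^ρ|_{e→p} vanishes. -/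
/-!
A pairing with `(m - 1) / 2` pairs covers at most `m - 1` indices, so if it covers all indices
but `j` its support is exactly the complement of `{j}`. The Ward identity at `j` with `e = p`
then expresses `F ρ p` as a sum over the indices outside `supp ρ ∪ {j}`, which is empty.
-/

open scoped Classical

/-- The support of a set of ordered pairs: all indices occurring in some pair. -/
def psupp {m : ℕ} (ρ : Finset (Fin m × Fin m)) : Finset (Fin m) :=
  ρ.image Prod.fst ∪ ρ.image Prod.snd

/-- `ρ` is a partition of its support into disjoint unordered pairs,
each pair being represented by the ordered pair `(a, b)` with `a < b`. -/
def IsPairing {m : ℕ} (ρ : Finset (Fin m × Fin m)) : Prop :=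
  (∀ q ∈ ρ, q.1 < q.2) ∧
  ∀ q ∈ ρ, ∀ q' ∈ ρ, q ≠ q' →
    q.1 ≠ q'.1 ∧ q.1 ≠ q'.2 ∧ q.2 ≠ q'.1 ∧ q.2 ≠ q'.2

/-- The unordered pair `(i j)` represented with increasing components. -/
def mkPair {m : ℕ} (i j : Fin m) : Fin m × Fin m := if i < j then (i, j) else (j, i)

/-- The substitution `e_a → p_a` for all `a ∈ J`, leaving the other `e_a` unchanged. -/
noncomputable def subst {m : ℕ} {V : Type*} (p : Fin m → V) (J : Finset (Fin m))
    (e : Fin m → V) : Fin m → V := fun a => if a ∈ J then p a else e a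

open Finset

lemma card_psupp_le_two_mul_card {m : ℕ} (ρ : Finset (Fin m × Fin m)) :
    #(psupp ρ) ≤ 2 * #ρ :=
  calc #(psupp ρ) ≤ #(ρ.image Prod.fst) + #(ρ.image Prod.snd) := card_union_le _ _
    _ ≤ #ρ + #ρ := add_le_add card_image_le card_image_le
    _ = 2 * #ρ := (two_mul _).symm

lemma psupp_eq_of_subset_of_two_mul_card_le {m : ℕ} {ρ : Finset (Fin m × Fin m)}
    {s : Finset (Fin m)} (hs : s ⊆ psupp ρ) (hcard : 2 * #ρ ≤ #s) : psupp ρ = s :=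
  (eq_of_subset_of_card_le hs ((card_psupp_le_two_mul_card ρ).trans hcard)).symm

lemma subst_self {m : ℕ} {V : Type*} (p : Fin m → V) (J : Finset (Fin m)) :
    subst p J p = p :=
  funext fun a => by by_cases ha : a ∈ J <;> simp [subst, ha]

theorem dimensional_reduction_vanishes_of_odd_general {m : ℕ} {V R : Type*} [CommRing R]
    (B : V → V → R) (p : Fin m → V)
    (F : Finset (Fin m × Fin m) → (Fin m → V) → R)
    (ward : ∀ ρ : Finset (Fin m × Fin m), IsPairing ρ →
      ∀ j ∉ psupp ρ, ∀ e : Fin m → V,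
        F ρ (subst p {j} e) =
          - ∑ i ∈ (Finset.univ \ psupp ρ).erase j,
              B (subst p {j} e i) (subst p {j} e j) *
                F (insert (mkPair i j) ρ) (subst p {j} e)) :
    ∀ j : Fin m,
      (∑ ρ : Finset (Fin m × Fin m),
        if IsPairing ρ ∧ ρ.card = (m - 1) / 2 ∧ Finset.univ.erase j ⊆ psupp ρ ∧
            (∀ q ∈ ρ, q.1 ∈ Finset.univ.erase j ∨ q.2 ∈ Finset.univ.erase j) then
          (-1 : R) ^ ((m - 1) / 2) * (∏ q ∈ ρ, B (p q.1) (p q.2)) * F ρ p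
        else 0) = 0 := by
  intro j
  refine sum_eq_zero fun ρ _ => ?_
  split_ifs with h
  · obtain ⟨hpair, hcard, hsub, -⟩ := h
    have hsupp : psupp ρ = univ.erase j :=
      psupp_eq_of_subset_of_two_mul_card_le hsub (by
        rw [card_erase_of_mem (mem_univ j), card_univ, Fintype.card_fin]; omega)
    have hj : j ∉ psupp ρ := hsupp ▸ notMem_erase j univ
    have hF : F ρ p = 0 := by
      simpa only [subst_self, hsupp, sdiff_erase_self (mem_univ j), erase_singleton,
        sum_empty, neg_zero] using ward ρ hpair j hj p
    rw [hF, mul_zero]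
  · rfl

/-- For an odd number `m` of gauge particles, if the blocks `F^ρ` of a multilinear
gauge-invariant function satisfy the Ward identity
`F^ρ|_{e_j→p_j} = -Σ_{i∉ρ, i≠j} ⟨e_i, e_j⟩ F^{ρ⊔(ij)}|_{e_j→p_j}`,
then for any singleton `I = {j}` the dimensionally reduced value
`Σ_{ρ∈(𝔖_{(m-1)/2}|I)} (-1)^{(m-1)/2} Π_{(ab)∈ρ} ⟨p_a, p_b⟩ F^ρ|_{e→p}` vanishes;
here `(𝔖_{(m-1)/2}|I)` consists of the pair partitions `ρ` with
`I = {1,…,m}\{j} ⊆ supp ρ` (hence `supp ρ = I`) and every pair of `ρ` meeting `I`. -/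
theorem dimensional_reduction_vanishes_of_odd {m : ℕ} {V R : Type*} [CommRing R]
    (hm : Odd m)
    (B : V → V → R) (p : Fin m → V)
    (F : Finset (Fin m × Fin m) → (Fin m → V) → R)
    (ward : ∀ ρ : Finset (Fin m × Fin m), IsPairing ρ →
      ∀ j ∉ psupp ρ, ∀ e : Fin m → V,
        F ρ (subst p {j} e) =
          - ∑ i ∈ (Finset.univ \ psupp ρ).erase j,
              B (subst p {j} e i) (subst p {j} e j) *
                F (insert (mkPair i j) ρ) (subst p {j} e)) :
    ∀ j : Fin m,
      (∑ ρ : Finset (Fin m × Fin m),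
        if IsPairing ρ ∧ ρ.card = (m - 1) / 2 ∧ Finset.univ.erase j ⊆ psupp ρ ∧
            (∀ q ∈ ρ, q.1 ∈ Finset.univ.erase j ∨ q.2 ∈ Finset.univ.erase j) then
          (-1 : R) ^ ((m - 1) / 2) * (∏ q ∈ ρ, B (p q.1) (p q.2)) * F ρ p
        else 0) = 0 :=
  dimensional_reduction_vanishes_of_odd_general B p F ward
end

section
/- Weighted matrix-tree identity at 4 points: with z_5 fixed (terms containing z_{i5} omitted as z_5 → ∞), det(Ã_{{3,4}})·PT(1,2,5) equals the sum over all labelled trees on nodes {1,2,3,4} containing the edge (1,2): s_{13}s_{14}/(z_{12}z_{31}z_{41}) + s_{23}s_{14}/(z_{12}z_{32}z_{41}) + s_{34}s_{14}/(z_{12}z_{34}z_{41}) + s_{13}s_{24}/(z_{12}z_{31}z_{42}) + s_{23}s_{24}/(z_{12}z_{32}z_{42}) + s_{24}s_{34}/(z_{12}z_{34}z_{42}) + s_{13}s_{34}/(z_{12}z_{31}z_{43}) + s_{23}s_{34}/(z_{12}z_{32}z_{43}), where Ã_{{3,4}} is the 2×2 submatrix of Ã = A - E on indices {3,4} with V_i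 restricted to j ∈ {1,2,3,4}, and PT(1,2,5) is taken as 1/z_{12} (dropping z_{25}, z_{51}). -/
/-!
Write `V₃ = x + c` and `V₄ = y - c`, where `c = s₃₄/z₃₄` is the weight of the edge `(3,4)` and
`x`, `y` collect the edges from `3`, `4` to the nodes `1`, `2` (this uses `s` symmetric). Then
`det Ã_{{3,4}} = (x + c)(y - c) + c² = xy + cy - xc`: the two `c²` terms cancel, and after
multiplying by `1/z₁₂` the eight remaining monomials are exactly the eight trees.
-/

open Finset

/-- `V_i = Σ_{j≠i} s_{ij}/(z_i - z_j)`, with `j` ranging over the four nodes. -/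
noncomputable def V4 (s : Fin 4 → Fin 4 → ℂ) (z : Fin 4 → ℂ) (i : Fin 4) : ℂ :=
  ∑ j ∈ univ.erase i, s i j / (z i - z j)

theorem Matrix.det_fin_two_neg_add_neg_sub {R : Type*} [CommRing R] (x y c : R) :
    !![-(x + c), c; -c, -(y - c)].det = x * y + c * y - x * c := by
  rw [Matrix.det_fin_two_of]
  ring

/-- The diagonal term `j = i` may be added back in, since `z i - z i = 0` and `a / 0 = 0`. -/
theorem V4_eq_sum_univ (s : Fin 4 → Fin 4 → ℂ) (z : Fin 4 → ℂ) (i : Fin 4) :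
    V4 s z i = ∑ j, s i j / (z i - z j) := by
  rw [V4, sum_erase _ (by rw [sub_self, div_zero])]

theorem matrix_tree_four_point_general (z : Fin 4 → ℂ)
    (s : Fin 4 → Fin 4 → ℂ) (hs : ∀ i j, s i j = s j i) :
    Matrix.det !![-(V4 s z 2), s 2 3 / (z 2 - z 3);
                  -(s 2 3 / (z 2 - z 3)), -(V4 s z 3)] * (1 / (z 0 - z 1)) =
        s 0 2 * s 0 3 / ((z 0 - z 1) * (z 2 - z 0) * (z 3 - z 0))
      + s 1 2 * s 0 3 / ((z 0 - z 1) * (z 2 - z 1) * (z 3 - z 0))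
      + s 2 3 * s 0 3 / ((z 0 - z 1) * (z 2 - z 3) * (z 3 - z 0))
      + s 0 2 * s 1 3 / ((z 0 - z 1) * (z 2 - z 0) * (z 3 - z 1))
      + s 1 2 * s 1 3 / ((z 0 - z 1) * (z 2 - z 1) * (z 3 - z 1))
      + s 1 3 * s 2 3 / ((z 0 - z 1) * (z 2 - z 3) * (z 3 - z 1))
      + s 0 2 * s 2 3 / ((z 0 - z 1) * (z 2 - z 0) * (z 3 - z 2))
      + s 1 2 * s 2 3 / ((z 0 - z 1) * (z 2 - z 1) * (z 3 - z 2)) := by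
  have hV2 : V4 s z 2 = (s 0 2 / (z 2 - z 0) + s 1 2 / (z 2 - z 1)) + s 2 3 / (z 2 - z 3) := by
    simp [V4_eq_sum_univ, Fin.sum_univ_four, hs 2 0, hs 2 1]
  have hV3 : V4 s z 3 = (s 0 3 / (z 3 - z 0) + s 1 3 / (z 3 - z 1)) - s 2 3 / (z 2 - z 3) := by
    rw [V4_eq_sum_univ, Fin.sum_univ_four, hs 3 0, hs 3 1, hs 3 2, sub_self, div_zero, add_zero,
      ← neg_sub (z 2) (z 3), div_neg]
    exact (sub_eq_add_neg _ _).symm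
  rw [hV2, hV3, Matrix.det_fin_two_neg_add_neg_sub, ← neg_sub (z 2) (z 3)]
  -- otherwise `ring` inverts each expanded product of differences as one opaque polynomial
  generalize z 0 - z 1 = a, z 2 - z 0 = b, z 2 - z 1 = c, z 2 - z 3 = d, z 3 - z 0 = e,
    z 3 - z 1 = f
  ring

/-- Weighted matrix-tree identity at 4 points (indices `0,…,3` standing for
`1,…,4`, with `z₅` already sent to infinity): `det(Ã_{{3,4}})·PT(1,2,5)` equals
the sum over all labelled trees on `{1,2,3,4}` containing the edge `(1,2)`. -/
theorem matrix_tree_four_point (z : Fin 4 → ℂ) (hz : Function.Injective z)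
    (s : Fin 4 → Fin 4 → ℂ) (hs : ∀ i j, s i j = s j i) :
    Matrix.det !![-(V4 s z 2), s 2 3 / (z 2 - z 3);
                  -(s 2 3 / (z 2 - z 3)), -(V4 s z 3)] * (1 / (z 0 - z 1)) =
        s 0 2 * s 0 3 / ((z 0 - z 1) * (z 2 - z 0) * (z 3 - z 0))
      + s 1 2 * s 0 3 / ((z 0 - z 1) * (z 2 - z 1) * (z 3 - z 0))
      + s 2 3 * s 0 3 / ((z 0 - z 1) * (z 2 - z 3) * (z 3 - z 0))
      + s 0 2 * s 1 3 / ((z 0 - z 1) * (z 2 - z 0) * (z 3 - z 1))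
      + s 1 2 * s 1 3 / ((z 0 - z 1) * (z 2 - z 1) * (z 3 - z 1))
      + s 1 3 * s 2 3 / ((z 0 - z 1) * (z 2 - z 3) * (z 3 - z 1))
      + s 0 2 * s 2 3 / ((z 0 - z 1) * (z 2 - z 0) * (z 3 - z 2))
      + s 1 2 * s 2 3 / ((z 0 - z 1) * (z 2 - z 1) * (z 3 - z 2)) :=
  matrix_tree_four_point_general z s hs
end
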